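/- Let α_1 ∈ (1/2, 1) be irrational with continued fraction expansion [0; a_1, a_2, …] (so a_1 = 1), suppose a_i > 1 for all i ≥ 2, and let (q_k)_{k≥0} be the denominators of the convergents of α_1. Set α = (α_1, 1 − α_1) ∈ ℝ². Then for every i ≥ 1, every N with 2q_{i+1} + 1 ≤ N ≤ q_{i+2}, and every 1 ≤ q ≤ ∞, one has g_N(α, ℤ², ‖·‖_q) = 1; in particular there are infinitely many N ∈ ℕ with g_N(α, ℤ², ‖·‖_q) = 1. -/

import Mathlib

open scoped BigOperators ENNReal NNReal

/-- Distance from a real number to the nearest integer (the torus norm on ℝ/ℤ). -/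
noncomputable def nint (t : ℝ) : ℝ := |t - round t|

/-- The `L_q` distance (for `1 ≤ q ≤ ∞`) between two points of the torus `ℝ^d/ℤ^d`,
computed on representatives in `ℝ^d`. -/
noncomputable def lqDist (q : ℝ≥0∞) {d : ℕ} (x y : Fin d → ℝ) : ℝ :=
  if q = ⊤ then ⨆ i, nint (x i - y i)
  else (∑ i, nint (x i - y i) ^ q.toReal) ^ (1 / q.toReal)

/-- The `n`-th point of the `d`-dimensional Kronecker sequence `z_n = nα + ℤ^d`
(as a representative in `ℝ^d`). -/
noncomputable def kron {d : ℕ} (α : Fin d → ℝ) (n : ℕ) : Fin d → ℝ :=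
  fun c => (n : ℝ) * α c

/-- `L_q`-distance on the torus between the `i`-th and `j`-th points of the
Kronecker sequence of `α`. -/
noncomputable def kronDist (q : ℝ≥0∞) {d : ℕ} (α : Fin d → ℝ) (i j : ℕ) : ℝ :=
  lqDist q (kron α i) (kron α j)

/-- The index `j ∈ {1, …, N} \ {i}` of the nearest neighbor of `z_i` in
`S_N = {z_1, …, z_N}` w.r.t. the `L_q` torus metric; ties are broken by taking
the largest such index. -/
noncomputable def nnIndex (q : ℝ≥0∞) {d : ℕ} (α : Fin d → ℝ) (N i : ℕ) : ℕ :=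
  sSup {j : ℕ | j ∈ Finset.Icc 1 N ∧ j ≠ i ∧
    ∀ m ∈ Finset.Icc 1 N, m ≠ i → kronDist q α i j ≤ kronDist q α i m}

/-- `h_i(N) = |j - i|` where `z_j` is the nearest neighbor of `z_i` in `S_N`:
the counting-metric distance of `z_i` to its nearest neighbor. -/
noncomputable def hFun (q : ℝ≥0∞) {d : ℕ} (α : Fin d → ℝ) (N i : ℕ) : ℕ :=
  Nat.dist (nnIndex q α N i) i

/-- `g_N(α, ℤ^d, ‖·‖_q)`: the number of distinct nearest neighbor distances
among `d_q(z_i, nn_1(z_i))`, `i = 1, …, N`. -/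
noncomputable def gN (q : ℝ≥0∞) {d : ℕ} (α : Fin d → ℝ) (N : ℕ) : ℕ :=
  ((Finset.Icc 1 N).image (fun i => kronDist q α i (nnIndex q α N i))).card

/-- The Gauss map `x ↦ {1/x}` generating the continued fraction expansion. -/
noncomputable def gaussMap (x : ℝ) : ℝ := Int.fract x⁻¹

/-- The partial quotients of the continued fraction expansion `[0; a_1, a_2, …]`
of an irrational `α ∈ (0,1)`: `a_n = ⌊1 / G^[n-1](α)⌋` (with `a_0 = 0`). -/
noncomputable def cfA (α : ℝ) : ℕ → ℕ
  | 0 => 0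
  | n + 1 => (⌊(gaussMap^[n] α)⁻¹⌋).toNat

/-- The denominators of the convergents of the continued fraction of `α`:
`q_0 = 1`, `q_1 = a_1`, `q_n = a_n q_{n-1} + q_{n-2}`. -/
noncomputable def cfQ (α : ℝ) : ℕ → ℕ
  | 0 => 1
  | 1 => cfA α 1
  | n + 2 => cfA α (n + 2) * cfQ α (n + 1) + cfQ α n

/-!
For `1 ≤ k < q_{n+1}` the convergents give `‖k α₁‖ ≥ |q_n α₁ - p_n| = δ_n`: writing `(k, ℓ)` in the
unimodular basis `(q_n, p_n), (q_{n+1}, p_{n+1})`, the coefficients have opposite signs while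
`q_n α₁ - p_n` and `q_{n+1} α₁ - p_{n+1}` alternate in sign, so the two errors add up. For
`α = (α₁, 1 - α₁)` both coordinates of `z_j - z_m` have torus norm `‖(j - m) α₁‖`, hence
`d_q(z_j, z_m) = c_q ‖(j - m) α₁‖`. If `2 q_{n+1} < N ≤ q_{n+2}`, all index differences in `S_N` are
below `q_{n+2}`, so no distance is smaller than `c_q δ_{n+1}`, and each `z_j` attains it at
`z_{j ± q_{n+1}}`, one of which lies in `S_N`. Thus all nearest neighbor distances coincide. Since
`a_{n+2} ≥ 2`, the window contains `N = 2 q_{n+1} + 1` for every `n`.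
-/

open Set

theorem nint_le (t : ℝ) (z : ℤ) : nint t ≤ |t - z| := round_le t z

theorem nint_neg_le (t : ℝ) : nint (-t) ≤ nint t :=
  (nint_le (-t) (-round t)).trans_eq <| by
    rw [nint, Int.cast_neg, ← abs_neg]
    ring_nf

theorem nint_neg (t : ℝ) : nint (-t) = nint t :=
  (nint_neg_le t).antisymm (by simpa using nint_neg_le (-t))

theorem nint_intCast_sub (z : ℤ) (t : ℝ) : nint (z - t) = nint t := by
  rw [← nint_neg t, nint, nint, sub_eq_neg_add (z : ℝ), round_add_intCast, Int.cast_add]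
  ring_nf

theorem gaussMap_iterate_irrational_mem_Ioo {α : ℝ} (hα : Irrational α) (h01 : α ∈ Ioo 0 1) :
    ∀ n, Irrational (gaussMap^[n] α) ∧ gaussMap^[n] α ∈ Ioo 0 1
  | 0 => ⟨hα, h01⟩
  | n + 1 => by
    obtain ⟨hirr, -⟩ := gaussMap_iterate_irrational_mem_Ioo hα h01 n
    rw [Function.iterate_succ_apply', gaussMap]
    have hfract : Irrational (Int.fract (gaussMap^[n] α)⁻¹) := hirr.inv.sub_intCast _
    exact ⟨hfract, (Int.fract_nonneg _).lt_of_ne' hfract.ne_zero, Int.fract_lt_one _⟩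

theorem one_le_floor_inv_gaussMap_iterate {α : ℝ} (hα : Irrational α) (h01 : α ∈ Ioo 0 1)
    (n : ℕ) : 1 ≤ ⌊(gaussMap^[n] α)⁻¹⌋ := by
  obtain ⟨-, hpos, hlt⟩ := gaussMap_iterate_irrational_mem_Ioo hα h01 n
  exact Int.le_floor.mpr (by exact_mod_cast (one_le_inv₀ hpos).mpr hlt.le)

theorem ne_zero_and_mul_nonpos_of_mul_add_mul_eq {Q Q' x y k : ℤ} (hQ : 0 < Q) (hQ' : 0 < Q')
    (hk₀ : k ≠ 0) (hk : |k| < Q') (h : x * Q + y * Q' = k) : x ≠ 0 ∧ x * y ≤ 0 := by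
  rw [abs_lt] at hk
  refine ⟨fun hx => ?_, ?_⟩
  · subst hx
    rcases lt_trichotomy y 0 with hy | rfl | hy
    · nlinarith
    · simp_all
    · nlinarith
  · by_contra! hxy
    rcases lt_or_gt_of_ne (left_ne_zero_of_mul hxy.ne') with hx | hx
    · nlinarith [neg_of_mul_pos_right hxy hx.le]
    · nlinarith [pos_of_mul_pos_right hxy hx.le]

theorem le_abs_mul_sub_mul {A B : ℝ} (hA : 0 ≤ A) (hB : 0 ≤ B) {x y : ℤ} (hx : x ≠ 0)
    (hxy : x * y ≤ 0) : A ≤ |x * A - y * B| := by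
  rcases lt_or_gt_of_ne hx with hx | hx
  · have hx' : (x : ℝ) ≤ -1 := by exact_mod_cast Int.le_sub_one_of_lt hx
    have hy : (0 : ℝ) ≤ y := by exact_mod_cast (show 0 ≤ y by nlinarith)
    rw [abs_sub_comm]
    nlinarith [le_abs_self (y * B - x * A)]
  · have hx' : (1 : ℝ) ≤ x := by exact_mod_cast hx
    have hy : (y : ℝ) ≤ 0 := by exact_mod_cast (show y ≤ 0 by nlinarith)
    nlinarith [le_abs_self (x * A - y * B)]

section ContinuedFraction

variable {α : ℝ}

theorem cfA_succ_eq_floor (hα : Irrational α) (h01 : α ∈ Ioo 0 1) (n : ℕ) :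
    (cfA α (n + 1) : ℤ) = ⌊(gaussMap^[n] α)⁻¹⌋ :=
  Int.toNat_of_nonneg (zero_le_one.trans (one_le_floor_inv_gaussMap_iterate hα h01 n))

theorem one_le_cfA_succ (hα : Irrational α) (h01 : α ∈ Ioo 0 1) (n : ℕ) : 1 ≤ cfA α (n + 1) := by
  have := one_le_floor_inv_gaussMap_iterate hα h01 n
  rw [← cfA_succ_eq_floor hα h01] at this
  exact_mod_cast this

theorem gaussMap_iterate_mul_succ (hα : Irrational α) (h01 : α ∈ Ioo 0 1) (n : ℕ) :
    gaussMap^[n] α * gaussMap^[n + 1] α = 1 - cfA α (n + 1) * gaussMap^[n] α := by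
  have hpos := (gaussMap_iterate_irrational_mem_Ioo hα h01 n).2.1
  have hcast : (cfA α (n + 1) : ℝ) = ⌊(gaussMap^[n] α)⁻¹⌋ := by
    exact_mod_cast cfA_succ_eq_floor hα h01 n
  rw [Function.iterate_succ_apply', gaussMap, Int.fract, ← hcast, mul_sub,
    mul_inv_cancel₀ hpos.ne', mul_comm]

theorem cfQ_add_two (α : ℝ) (n : ℕ) : cfQ α (n + 2) = cfA α (n + 2) * cfQ α (n + 1) + cfQ α n :=
  rfl

theorem cfQ_pos (hα : Irrational α) (h01 : α ∈ Ioo 0 1) : ∀ n, 0 < cfQ α n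
  | 0 => Nat.one_pos
  | 1 => one_le_cfA_succ hα h01 0
  | n + 2 => by
    have := cfQ_pos hα h01 n
    rw [cfQ_add_two]
    omega

theorem cfQ_succ_lt (hα : Irrational α) (h01 : α ∈ Ioo 0 1) (n : ℕ) :
    cfQ α (n + 1) < cfQ α (n + 2) := by
  have := cfQ_pos hα h01 n
  have ha : 1 ≤ cfA α (n + 2) := one_le_cfA_succ hα h01 (n + 1)
  have := Nat.le_mul_of_pos_left (cfQ α (n + 1)) ha
  rw [cfQ_add_two]
  omega

theorem two_mul_cfQ_succ_lt (hα : Irrational α) (h01 : α ∈ Ioo 0 1) {n : ℕ}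
    (ha : 2 ≤ cfA α (n + 2)) : 2 * cfQ α (n + 1) < cfQ α (n + 2) := by
  have := cfQ_pos hα h01 n
  have := Nat.mul_le_mul_right (cfQ α (n + 1)) ha
  rw [cfQ_add_two]
  omega

noncomputable def cfP (α : ℝ) : ℕ → ℕ
  | 0 => 0
  | 1 => 1
  | n + 2 => cfA α (n + 2) * cfP α (n + 1) + cfP α n

/-- `|q_n α - p_n|`, computed as the product `θ_0 ⋯ θ_n` of the Gauss orbit `θ_k = G^k α`. -/
noncomputable def cfDelta (α : ℝ) (n : ℕ) : ℝ :=
  ∏ k ∈ Finset.range (n + 1), gaussMap^[k] α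

theorem cfDelta_pos (hα : Irrational α) (h01 : α ∈ Ioo 0 1) (n : ℕ) : 0 < cfDelta α n :=
  Finset.prod_pos fun k _ => (gaussMap_iterate_irrational_mem_Ioo hα h01 k).2.1

theorem cfDelta_succ (α : ℝ) (n : ℕ) : cfDelta α (n + 1) = cfDelta α n * gaussMap^[n + 1] α :=
  Finset.prod_range_succ _ _

theorem cfQ_mul_sub_cfP (hα : Irrational α) (h01 : α ∈ Ioo 0 1) :
    ∀ n, (cfQ α n : ℝ) * α - cfP α n = (-1) ^ n * cfDelta α n
  | 0 => by simp [cfQ, cfP, cfDelta]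
  | 1 => by
    have hθ : α * gaussMap α = 1 - cfA α 1 * α := gaussMap_iterate_mul_succ hα h01 0
    simp only [cfQ, cfP, cfDelta, Finset.prod_range_succ, Finset.prod_range_zero,
      Function.iterate_zero, Function.iterate_one, id, one_mul, Nat.cast_one]
    linear_combination hθ
  | n + 2 => by
    have ih₀ := cfQ_mul_sub_cfP hα h01 n
    have ih₁ := cfQ_mul_sub_cfP hα h01 (n + 1)
    have hθ : gaussMap^[n + 1] α * gaussMap^[n + 2] α = 1 - cfA α (n + 2) * gaussMap^[n + 1] α :=
      gaussMap_iterate_mul_succ hα h01 (n + 1)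
    rw [cfDelta_succ] at ih₁
    rw [cfQ_add_two, cfP, cfDelta_succ, cfDelta_succ, mul_assoc, hθ]
    push_cast
    linear_combination (cfA α (n + 2) : ℝ) * ih₁ + ih₀

theorem cfP_succ_mul_cfQ_sub (α : ℝ) :
    ∀ n, (cfP α (n + 1) : ℤ) * cfQ α n - cfP α n * cfQ α (n + 1) = (-1) ^ n
  | 0 => by simp [cfP, cfQ]
  | n + 1 => by
    have ih := cfP_succ_mul_cfQ_sub α n
    rw [cfP, cfQ_add_two]
    push_cast
    linear_combination -ih

end ContinuedFraction

section BestApproximation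

variable {α : ℝ}

theorem cfDelta_le_abs_mul_sub (hα : Irrational α) (h01 : α ∈ Ioo 0 1) (n : ℕ) {k : ℤ}
    (hk₀ : k ≠ 0) (hk : |k| < cfQ α (n + 1)) (ℓ : ℤ) : cfDelta α n ≤ |k * α - ℓ| := by
  have hdet := cfP_succ_mul_cfQ_sub α n
  have hsign : ((-1 : ℤ) ^ n) ^ 2 = 1 := by rw [← pow_mul, mul_comm, pow_mul, neg_one_sq, one_pow]
  -- `(x, y)`: coordinates of `(k, ℓ)` in the unimodular basis `(q_n, p_n), (q_{n+1}, p_{n+1})`.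
  set x : ℤ := (-1) ^ n * (k * cfP α (n + 1) - ℓ * cfQ α (n + 1))
  set y : ℤ := (-1) ^ n * (ℓ * cfQ α n - k * cfP α n)
  have hxk : x * cfQ α n + y * cfQ α (n + 1) = k := by
    linear_combination (k * (-1) ^ n) * hdet + k * hsign
  have hyℓ : x * cfP α n + y * cfP α (n + 1) = ℓ := by
    linear_combination (ℓ * (-1) ^ n) * hdet + ℓ * hsign
  have hsplit : (k : ℝ) * α - ℓ = (-1) ^ n * (x * cfDelta α n - y * cfDelta α (n + 1)) := by
    rw [← Int.cast_inj (α := ℝ)] at hxk hyℓ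
    push_cast at hxk hyℓ
    rw [← hxk, ← hyℓ]
    linear_combination (x : ℝ) * cfQ_mul_sub_cfP hα h01 n + (y : ℝ) * cfQ_mul_sub_cfP hα h01 (n + 1)
  obtain ⟨hx, hxy⟩ := ne_zero_and_mul_nonpos_of_mul_add_mul_eq (by exact_mod_cast cfQ_pos hα h01 n)
    (by exact_mod_cast cfQ_pos hα h01 (n + 1)) hk₀ hk hxk
  rw [hsplit, abs_mul, abs_pow, abs_neg, abs_one, one_pow, one_mul]
  exact le_abs_mul_sub_mul (cfDelta_pos hα h01 n).le (cfDelta_pos hα h01 (n + 1)).le hx hxy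

theorem cfDelta_le_nint (hα : Irrational α) (h01 : α ∈ Ioo 0 1) (n : ℕ) {k : ℤ} (hk₀ : k ≠ 0)
    (hk : |k| < cfQ α (n + 1)) : cfDelta α n ≤ nint (k * α) :=
  cfDelta_le_abs_mul_sub hα h01 n hk₀ hk _

theorem nint_cfQ_succ_mul (hα : Irrational α) (h01 : α ∈ Ioo 0 1) (n : ℕ) :
    nint (cfQ α (n + 1) * α) = cfDelta α (n + 1) := by
  refine le_antisymm ?_ ?_
  · calc nint (cfQ α (n + 1) * α) ≤ |cfQ α (n + 1) * α - ((cfP α (n + 1) : ℤ) : ℝ)| :=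
          nint_le _ _
      _ = cfDelta α (n + 1) := by
        rw [Int.cast_natCast, cfQ_mul_sub_cfP hα h01, abs_mul, abs_pow, abs_neg, abs_one,
          one_pow, one_mul, abs_of_pos (cfDelta_pos hα h01 (n + 1))]
  · have hQ := cfQ_pos hα h01 (n + 1)
    have hlt := cfQ_succ_lt hα h01 n
    simpa using cfDelta_le_nint hα h01 (n + 1) (k := cfQ α (n + 1)) (by omega)
      (by rw [Nat.abs_cast]; exact_mod_cast hlt)

end BestApproximation

/-- Since `k (1 - α₁) ≡ -k α₁ (mod 1)`, both coordinates of `z_j - z_m` have the same torus norm. -/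
theorem exists_kronDist_eq_mul_nint {q : ℝ≥0∞} (hq : q ≠ 0) (α₁ : ℝ) :
    ∃ c : ℝ, 0 < c ∧ ∀ j m : ℕ,
      kronDist q ![α₁, 1 - α₁] j m = c * nint (((j : ℤ) - m : ℤ) * α₁) := by
  have hcoord : ∀ (j m : ℕ) (c : Fin 2), nint (kron ![α₁, 1 - α₁] j c - kron ![α₁, 1 - α₁] m c)
      = nint (((j : ℤ) - m : ℤ) * α₁) := by
    intro j m c
    fin_cases c
    · simp only [kron]
      push_cast
      ring_nf
    · simp only [kron]
      rw [← nint_intCast_sub ((j : ℤ) - m)]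
      push_cast
      ring_nf
  by_cases htop : q = ⊤
  · refine ⟨1, one_pos, fun j m => ?_⟩
    simp only [kronDist, lqDist, htop, if_true, hcoord, ciSup_const, one_mul]
  · have hp : q.toReal ≠ 0 := ENNReal.toReal_ne_zero.mpr ⟨hq, htop⟩
    refine ⟨2 ^ (1 / q.toReal), by positivity, fun j m => ?_⟩
    have ht : 0 ≤ nint (((j : ℤ) - m : ℤ) * α₁) := abs_nonneg _
    simp only [kronDist, lqDist, htop, if_false, Fin.sum_univ_two, hcoord, ← two_mul]
    rw [Real.mul_rpow (by norm_num) (Real.rpow_nonneg ht _), ← Real.rpow_mul ht,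
      mul_one_div_cancel hp, Real.rpow_one]

section NearestNeighbor

variable {q : ℝ≥0∞} {d : ℕ} {α : Fin d → ℝ} {N j : ℕ}

theorem kronDist_nnIndex_eq {m₀ : ℕ} {D : ℝ} (hm₀ : m₀ ∈ Finset.Icc 1 N) (hm₀j : m₀ ≠ j)
    (hD : kronDist q α j m₀ = D)
    (hle : ∀ m ∈ Finset.Icc 1 N, m ≠ j → D ≤ kronDist q α j m) :
    kronDist q α j (nnIndex q α N j) = D := by
  have hm₀S : m₀ ∈ {m : ℕ | m ∈ Finset.Icc 1 N ∧ m ≠ j ∧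
      ∀ m' ∈ Finset.Icc 1 N, m' ≠ j → kronDist q α j m ≤ kronDist q α j m'} :=
    ⟨hm₀, hm₀j, fun m' hm' hm'j => hD ▸ hle m' hm' hm'j⟩
  obtain ⟨hmem, hne, hmin⟩ :=
    Nat.sSup_mem ⟨m₀, hm₀S⟩ ⟨N, fun m hm => (Finset.mem_Icc.mp hm.1).2⟩
  exact le_antisymm (hD ▸ hmin m₀ hm₀ hm₀j) (hle _ hmem hne)

theorem gN_eq_one_of_forall_eq {D : ℝ} (hN : 1 ≤ N)
    (h : ∀ j ∈ Finset.Icc 1 N, kronDist q α j (nnIndex q α N j) = D) : gN q α N = 1 := by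
  rw [gN, Finset.image_congr h, Finset.image_const ⟨1, Finset.mem_Icc.mpr ⟨le_rfl, hN⟩⟩,
    Finset.card_singleton]

end NearestNeighbor

theorem kronDist_nnIndex_eq_of_window {α₁ : ℝ} (hα : Irrational α₁) (h01 : α₁ ∈ Ioo 0 1)
    {q : ℝ≥0∞} {c : ℝ} (hc : 0 ≤ c)
    (hdist : ∀ j m : ℕ, kronDist q ![α₁, 1 - α₁] j m = c * nint (((j : ℤ) - m : ℤ) * α₁))
    {n N : ℕ} (hN₁ : 2 * cfQ α₁ (n + 1) < N) (hN₂ : N ≤ cfQ α₁ (n + 2)) :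
    ∀ j ∈ Finset.Icc 1 N,
      kronDist q ![α₁, 1 - α₁] j (nnIndex q ![α₁, 1 - α₁] N j) = c * cfDelta α₁ (n + 1) := by
  intro j hj
  rw [Finset.mem_Icc] at hj
  set Q := cfQ α₁ (n + 1)
  have hQ : 0 < Q := cfQ_pos hα h01 (n + 1)
  have hnintQ : nint (Q * α₁) = cfDelta α₁ (n + 1) := nint_cfQ_succ_mul hα h01 n
  refine kronDist_nnIndex_eq (m₀ := if j + Q ≤ N then j + Q else j - Q) ?_ ?_ ?_ ?_
  · split_ifs <;> rw [Finset.mem_Icc] <;> omega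
  · split_ifs <;> omega
  · rw [hdist]
    split_ifs with h
    · rw [show (((j : ℤ) - (j + Q : ℕ) : ℤ) : ℝ) * α₁ = -(Q * α₁) by push_cast; ring, nint_neg,
        hnintQ]
    · have hQj : Q ≤ j := by omega
      rw [show (((j : ℤ) - (j - Q : ℕ) : ℤ) : ℝ) * α₁ = Q * α₁ by push_cast [hQj]; ring, hnintQ]
  · intro m hm hmj
    rw [Finset.mem_Icc] at hm
    rw [hdist]
    refine mul_le_mul_of_nonneg_left (cfDelta_le_nint hα h01 (n + 1) (by omega) ?_) hc
    change _ < ((cfQ α₁ (n + 2) : ℕ) : ℤ)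
    rw [abs_lt]
    constructor <;> omega

/-- For irrational `α_1 ∈ (1/2, 1)` with partial quotients `a_i > 1` for all
`i ≥ 2`, convergent denominators `(q_k)`, and `α = (α_1, 1 - α_1)`: for every `i ≥ 1`,
every `N` with `2q_{i+1} + 1 ≤ N ≤ q_{i+2}` and every `1 ≤ q ≤ ∞` one has
`g_N(α, ℤ², ‖·‖_q) = 1`; in particular `g_N = 1` for infinitely many `N`. -/
theorem statement4 (α1 : ℝ) (hmem : α1 ∈ Set.Ioo (1/2 : ℝ) 1) (hirr : Irrational α1)
    (ha : ∀ i, 2 ≤ i → 1 < cfA α1 i) (q : ℝ≥0∞) (hq : 1 ≤ q) :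
    (∀ i, 1 ≤ i → ∀ N, 2 * cfQ α1 (i + 1) + 1 ≤ N → N ≤ cfQ α1 (i + 2) →
      gN q ![α1, 1 - α1] N = 1) ∧
    {N : ℕ | gN q ![α1, 1 - α1] N = 1}.Infinite := by
  have h01 : α1 ∈ Ioo 0 1 := ⟨by linarith [hmem.1], hmem.2⟩
  obtain ⟨c, hc, hdist⟩ := exists_kronDist_eq_mul_nint (zero_lt_one.trans_le hq).ne' α1
  have window : ∀ n N, 2 * cfQ α1 (n + 1) < N → N ≤ cfQ α1 (n + 2) →
      gN q ![α1, 1 - α1] N = 1 := fun n N hN₁ hN₂ =>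
    gN_eq_one_of_forall_eq (by omega) (kronDist_nnIndex_eq_of_window hirr h01 hc.le hdist hN₁ hN₂)
  refine ⟨fun i _ N hN₁ => window i N hN₁, ?_⟩
  refine Set.infinite_of_injective_forall_mem (f := fun n => 2 * cfQ α1 (n + 1) + 1) ?_
    fun n => window n _ (Nat.lt_succ_self _) (two_mul_cfQ_succ_lt hirr h01 (ha (n + 2) le_add_self))
  refine StrictMono.injective (strictMono_nat_of_lt_succ fun n => ?_)
  change 2 * cfQ α1 (n + 1) + 1 < 2 * cfQ α1 (n + 2) + 1
  have := cfQ_succ_lt hirr h01 n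
  omega
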